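/- Let p, q, u, v be pairwise coprime positive integers, N = pquv, r₁ = pu, s₁ = qv, r₂ = pv, s₂ = qu, and let σ_{1/r₁}, σ_{1/r₂} ∈ SL₂(ℝ) be the Atkin–Lehner scaling matrices of 1/r₁ and 1/r₂. Let c be a positive integer with pq ∣ c and gcd(c, uv) = 1, and set γ₀ = c·√(uv). Then the set of elements M of σ_{1/r₁}⁻¹ · Γ₀(N) · σ_{1/r₂} with lower-left entry M₂₁ = γ₀, upper-left entry M₁₁ ∈ [0, γ₀), and lower-right entry M₂₂ ∈ [0, γ₀) is exactly the set of matrices [[x√(uv), (xwuv − 1)/(c√(uv))], [c√(uv), w√(uv)]] where x, w are integers with 0 ≤ x < c, 0 ≤ w < c and x·w·uv ≡ 1 (mod c). Moreover, every element M' of σ_{1/r₁}⁻¹ · Γ₀(N) · σ_{1/r₂} with lower-left entry γ₀ can be written uniquely as [[1, j],[0, 1]]⁻¹ · M · [[1, k],[0, 1]]⁻¹ with M in this set and j, k ∈ ℤ. -/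

import Mathlib

/-!
Write `σ₁ = τ₁ ν₁` and `σ₂ = τ₂ ν₂` with `τᵢ ∈ SL₂(ℤ)` and `νᵢ` diagonal. Conjugation by the
`τᵢ` identifies `σ₁⁻¹ Γ₀(pquv) σ₂` with the matrices `ν₁⁻¹ H ν₂`, where `H ∈ SL₂(ℤ)` has entries
divisible by `[[v, q], [p, u]]`. Writing `H = [[vx, qe], [py, uw]]`, these are exactly the
matrices `[[x√(uv), e/√(uv)], [pqy√(uv), w√(uv)]]` with `xwuv - pqye = 1`. Prescribing the
lower-left entry `c√(uv)` forces `pqy = c`, and multiplying by `[[1, j], [0, 1]]` on the left and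
`[[1, k], [0, 1]]` on the right replaces `x, w` by `x + jc, w + kc`, so each such matrix has a
unique translate with `0 ≤ x, w < c`.
-/

open Matrix

lemma map_fin_two_of {α β : Type*} (f : α → β) (a b c d : α) :
    (!![a, b; c, d]).map f = !![f a, f b; f c, f d] := by
  ext i j; fin_cases i <;> fin_cases j <;> rfl

lemma inv_diagonal_fin_two {s : ℝ} (hs : s ≠ 0) :
    (!![s, 0; 0, s⁻¹])⁻¹ = !![s⁻¹, 0; 0, s] := by
  apply inv_eq_left_inv
  simp [one_fin_two, hs]

lemma inv_mul_map_mul_eq_of_det_eq_one {A : Matrix (Fin 2) (Fin 2) ℤ} (hA : A.det = 1)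
    (B g : Matrix (Fin 2) (Fin 2) ℤ) {s : ℝ} (hs : s ≠ 0) (t : ℝ) :
    (A.map (Int.cast : ℤ → ℝ) * !![s, 0; 0, s⁻¹])⁻¹ * g.map (Int.cast : ℤ → ℝ) *
        (B.map (Int.cast : ℤ → ℝ) * !![t, 0; 0, t⁻¹]) =
      !![s⁻¹, 0; 0, s] * (A.adjugate * g * B).map (Int.cast : ℤ → ℝ) * !![t, 0; 0, t⁻¹] := by
  let φ := (Int.castRingHom ℝ).mapMatrix (m := Fin 2)
  change (φ A * _)⁻¹ * φ g * (φ B * _) = _ * φ (A.adjugate * g * B) * _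
  have hAinv : (φ A)⁻¹ = φ A.adjugate := by
    apply inv_eq_left_inv
    rw [← map_mul, adjugate_mul, hA, one_smul, map_one]
  rw [Matrix.mul_inv_rev, inv_diagonal_fin_two hs, hAinv, map_mul, map_mul]
  simp only [Matrix.mul_assoc]

lemma diagonal_mul_mul_diagonal {a b c : ℝ} (ha : a ≠ 0) (hb : b ≠ 0) (hc : c ≠ 0)
    (x e y w : ℝ) :
    !![(a * c)⁻¹, 0; 0, a * c] * !![c ^ 2 * x, a ^ 2 * e; y, b ^ 2 * w] *
        !![a * b, 0; 0, (a * b)⁻¹] =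
      !![x * (b * c), e / (b * c); a ^ 2 * y * (b * c), w * (b * c)] := by
  rw [mul_fin_two, mul_fin_two]
  ext i j; fin_cases i <;> fin_cases j <;> simp <;> field_simp

lemma unipotent_mul_mul_unipotent_apply (a b : ℝ) (M : Matrix (Fin 2) (Fin 2) ℝ) :
    (!![1, a; 0, 1] * M * !![1, b; 0, 1]) 0 0 = M 0 0 + a * M 1 0 ∧
    (!![1, a; 0, 1] * M * !![1, b; 0, 1]) 1 0 = M 1 0 ∧
    (!![1, a; 0, 1] * M * !![1, b; 0, 1]) 1 1 = M 1 1 + b * M 1 0 := by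
  simp [mul_apply, Fin.sum_univ_two, vecMul, dotProduct, mul_comm, add_comm]

lemma isUnit_det_unipotent (t : ℝ) : IsUnit (!![1, t; 0, 1]).det := by simp

lemma existsUnique_translate_mem_Ico {S : Set (Matrix (Fin 2) (Fin 2) ℝ)} {γ : ℝ} (hγ : 0 < γ)
    (hS : ∀ M ∈ S, M 1 0 = γ → ∀ j k : ℤ,
      !![1, (j : ℝ); 0, 1] * M * !![1, (k : ℝ); 0, 1] ∈ S)
    {M' : Matrix (Fin 2) (Fin 2) ℝ} (hM' : M' ∈ S) (h10 : M' 1 0 = γ) :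
    ∃! t : ℤ × ℤ × Matrix (Fin 2) (Fin 2) ℝ,
      t.2.2 ∈ {M ∈ S | M 1 0 = γ ∧ M 0 0 ∈ Set.Ico 0 γ ∧ M 1 1 ∈ Set.Ico 0 γ} ∧
        M' = (!![(1 : ℝ), (t.1 : ℝ); 0, 1])⁻¹ * t.2.2 * (!![(1 : ℝ), (t.2.1 : ℝ); 0, 1])⁻¹ := by
  obtain ⟨j, hj, hj_unique⟩ := existsUnique_add_zsmul_mem_Ico hγ (M' 0 0) 0
  obtain ⟨k, hk, hk_unique⟩ := existsUnique_add_zsmul_mem_Ico hγ (M' 1 1) 0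
  simp only [zero_add, zsmul_eq_mul] at hj hk hj_unique hk_unique
  have hentries (j k : ℤ) := unipotent_mul_mul_unipotent_apply j k M'
  simp only [h10] at hentries
  have hcancel (j k : ℤ) (M : Matrix (Fin 2) (Fin 2) ℝ) :
      (!![(1 : ℝ), (j : ℝ); 0, 1])⁻¹ * (!![1, (j : ℝ); 0, 1] * M * !![1, (k : ℝ); 0, 1]) *
        (!![(1 : ℝ), (k : ℝ); 0, 1])⁻¹ = M := by
    rw [← Matrix.mul_assoc, nonsing_inv_mul_cancel_left _ _ (isUnit_det_unipotent _),
      mul_nonsing_inv_cancel_right _ _ (isUnit_det_unipotent _)]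
  refine ⟨(j, k, !![1, (j : ℝ); 0, 1] * M' * !![1, (k : ℝ); 0, 1]),
    ⟨⟨hS M' hM' h10 j k, ?_⟩, (hcancel j k M').symm⟩, ?_⟩
  · obtain ⟨h00, h10', h11⟩ := hentries j k
    dsimp only
    rw [h00, h10', h11]
    exact ⟨rfl, hj, hk⟩
  · rintro ⟨j', k', M⟩ ⟨⟨-, -, hM00, hM11⟩, hM'⟩
    dsimp only at hM00 hM11 hM'
    have hM : M = !![1, (j' : ℝ); 0, 1] * M' * !![1, (k' : ℝ); 0, 1] := by
      rw [hM', Matrix.mul_assoc, nonsing_inv_mul_cancel_right _ _ (isUnit_det_unipotent _),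
        mul_nonsing_inv_cancel_left _ _ (isUnit_det_unipotent _)]
    obtain ⟨h00, -, h11⟩ := hentries j' k'
    rw [hM, h00] at hM00
    rw [hM, h11] at hM11
    obtain rfl := hj_unique j' hM00
    obtain rfl := hk_unique k' hM11
    rw [hM]

noncomputable def cosetForm (ρ : ℝ) (x e c w : ℤ) : Matrix (Fin 2) (Fin 2) ℝ :=
  !![x * ρ, e / ρ; c * ρ, w * ρ]

lemma diagonal_mul_map_mul_diagonal_eq_cosetForm {q u v : ℤ} (hq : 0 < q) (hu : 0 < u)
    (hv : 0 < v) (p x e y w : ℤ) :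
    !![(√((q * v : ℤ) : ℝ))⁻¹, 0; 0, √((q * v : ℤ) : ℝ)] *
        (!![v * x, q * e; p * y, u * w]).map (Int.cast : ℤ → ℝ) *
        !![√((q * u : ℤ) : ℝ), 0; 0, (√((q * u : ℤ) : ℝ))⁻¹] =
      cosetForm √((u * v : ℤ) : ℝ) x e (p * q * y) w := by
  have hsq (n : ℤ) (hn : 0 < n) : √(n : ℝ) ^ 2 = n := Real.sq_sqrt (by positivity)
  have hne (n : ℤ) (hn : 0 < n) : √(n : ℝ) ≠ 0 := (Real.sqrt_pos.2 (by exact_mod_cast hn)).ne'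
  have h := diagonal_mul_mul_diagonal (hne q hq) (hne u hu) (hne v hv) x e (p * y) w
  rw [hsq q hq, hsq u hu, hsq v hv] at h
  push_cast [map_fin_two_of, cosetForm]
  rw [Real.sqrt_mul (by positivity), Real.sqrt_mul (by positivity),
    Real.sqrt_mul (by positivity), h]
  ring_nf

lemma unipotent_mul_cosetForm_mul_unipotent {ρ : ℝ} (hρ : ρ ≠ 0) {m : ℤ} (hρm : ρ ^ 2 = m)
    (j k x e c w : ℤ) :
    !![1, (j : ℝ); 0, 1] * cosetForm ρ x e c w * !![1, (k : ℝ); 0, 1] =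
      cosetForm ρ (x + j * c) (e + (j * w + k * x + j * k * c) * m) c (w + k * c) := by
  rw [cosetForm, cosetForm, mul_fin_two, mul_fin_two]
  ext i j; fin_cases i <;> fin_cases j <;> simp <;> field_simp
  · rw [hρm]; ring
  · ring

lemma cosetForm_eq_of_sub_mul_eq_one {ρ : ℝ} {x e c w n : ℤ} (hc : c ≠ 0)
    (hrel : n - c * e = 1) :
    cosetForm ρ x e c w = !![x * ρ, ((n : ℝ) - 1) / (c * ρ); c * ρ, w * ρ] := by
  have hrel' : (n : ℝ) - 1 = c * e := by
    exact_mod_cast (by linear_combination hrel : n - 1 = c * e)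
  rw [cosetForm, hrel', mul_div_mul_left _ _ (Int.cast_ne_zero.2 hc)]

lemma exists_cosetForm_mem_Ico_iff {ρ : ℝ} (hρ : 0 < ρ) {u v c : ℤ} (hc : 0 < c)
    (M : Matrix (Fin 2) (Fin 2) ℝ) :
    ((∃ x e w : ℤ, x * w * u * v - c * e = 1 ∧ M = cosetForm ρ x e c w) ∧
        M 0 0 ∈ Set.Ico 0 (c * ρ) ∧ M 1 1 ∈ Set.Ico 0 (c * ρ)) ↔
      ∃ x w : ℤ, 0 ≤ x ∧ x < c ∧ 0 ≤ w ∧ w < c ∧ x * w * u * v ≡ 1 [ZMOD c] ∧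
        M = !![(x : ℝ) * ρ, (((x * w * u * v : ℤ) : ℝ) - 1) / ((c : ℝ) * ρ);
          (c : ℝ) * ρ, (w : ℝ) * ρ] := by
  have hIco (n : ℤ) : (n : ℝ) * ρ ∈ Set.Ico 0 (c * ρ) ↔ 0 ≤ n ∧ n < c := by
    rw [Set.mem_Ico, mul_nonneg_iff_of_pos_right hρ, mul_lt_mul_iff_of_pos_right hρ]
    exact_mod_cast Iff.rfl
  constructor
  · rintro ⟨⟨x, e, w, hrel, rfl⟩, h00, h11⟩
    simp only [cosetForm, of_apply, cons_val', cons_val_one, cons_val_zero, empty_val',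
      cons_val_fin_one, hIco] at h00 h11
    exact ⟨x, w, h00.1, h00.2, h11.1, h11.2,
      (Int.modEq_of_dvd ⟨e, by linear_combination hrel⟩).symm,
      cosetForm_eq_of_sub_mul_eq_one hc.ne' hrel⟩
  · rintro ⟨x, w, hx0, hxc, hw0, hwc, hmod, rfl⟩
    obtain ⟨e, he⟩ := hmod.symm.dvd
    have hrel : x * w * u * v - c * e = 1 := by linear_combination he
    refine ⟨⟨x, e, w, hrel, (cosetForm_eq_of_sub_mul_eq_one hc.ne' hrel).symm⟩, ?_, ?_⟩
    · simpa using (hIco x).2 ⟨hx0, hxc⟩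
    · simpa using (hIco w).2 ⟨hw0, hwc⟩

/-- The matrix `τ_r` of the paper, with `b = (s̄ s - 1) / r`. -/
def atkinLehnerTau (r s sbar b : ℤ) : Matrix (Fin 2) (Fin 2) ℤ := !![1, b; r, sbar * s]

noncomputable def atkinLehnerSigma (r s sbar b : ℤ) : Matrix (Fin 2) (Fin 2) ℝ :=
  (atkinLehnerTau r s sbar b).map (Int.cast : ℤ → ℝ) * !![√(s : ℝ), 0; 0, (√(s : ℝ))⁻¹]

lemma atkinLehnerSigma_eq (r s sbar b : ℤ) :
    atkinLehnerSigma r s sbar b =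
      !![1, (b : ℝ); (r : ℝ), ((sbar * s : ℤ) : ℝ)] *
        !![√(s : ℝ), 0; 0, (√(s : ℝ))⁻¹] := by
  rw [atkinLehnerSigma, atkinLehnerTau, map_fin_two_of, Int.cast_one]

lemma det_atkinLehnerTau {r s sbar b : ℤ} (h : sbar * s - 1 = r * b) :
    (atkinLehnerTau r s sbar b).det = 1 := by
  rw [atkinLehnerTau, det_fin_two_of]; linear_combination h

section AtkinLehner

variable {p q u v sbar₁ sbar₂ b₁ b₂ : ℤ}

lemma dvd_entries_of_dvd_lowerLeft (g : Matrix (Fin 2) (Fin 2) ℤ)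
    (hg : p * q * u * v ∣ g 1 0) :
    let H := (atkinLehnerTau (p * u) (q * v) sbar₁ b₁).adjugate * g *
      atkinLehnerTau (p * v) (q * u) sbar₂ b₂
    v ∣ H 0 0 ∧ q ∣ H 0 1 ∧ p ∣ H 1 0 ∧ u ∣ H 1 1 := by
  obtain ⟨m, hm⟩ := hg
  rw [eta_fin_two g, hm]
  simp only [atkinLehnerTau, adjugate_fin_two_of, mul_fin_two, of_apply, cons_val',
    cons_val_zero, cons_val_one, empty_val', cons_val_fin_one]
  exact ⟨⟨sbar₁ * q * g 0 0 - b₁ * p * q * u * m + p * (sbar₁ * (q * v) * g 0 1 - b₁ * g 1 1),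
      by ring⟩,
    ⟨(sbar₁ * v * g 0 0 - b₁ * p * u * v * m) * b₂ +
      (sbar₁ * (q * v) * g 0 1 - b₁ * g 1 1) * sbar₂ * u, by ring⟩,
    ⟨-u * g 0 0 + q * u * v * m + (-(p * u) * g 0 1 + g 1 1) * v, by ring⟩,
    ⟨(-p * g 0 0 + p * q * v * m) * b₂ + (-(p * u) * g 0 1 + g 1 1) * sbar₂ * q, by ring⟩⟩

lemma dvd_lowerLeft_of_dvd_entries (x e y w : ℤ) :
    p * q * u * v ∣ (atkinLehnerTau (p * u) (q * v) sbar₁ b₁ *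
      !![v * x, q * e; p * y, u * w] * (atkinLehnerTau (p * v) (q * u) sbar₂ b₂).adjugate) 1 0 := by
  simp only [atkinLehnerTau, adjugate_fin_two_of, mul_fin_two, of_apply, cons_val',
    cons_val_zero, cons_val_one, empty_val', cons_val_fin_one]
  exact ⟨u * x * sbar₂ + sbar₁ * y * sbar₂ * q - e * p - sbar₁ * w * v, by ring⟩

lemma exists_gamma0_iff_cosetForm (hq : 0 < q) (hu : 0 < u) (hv : 0 < v)
    (h₁ : sbar₁ * (q * v) - 1 = (p * u) * b₁) (h₂ : sbar₂ * (q * u) - 1 = (p * v) * b₂)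
    (M : Matrix (Fin 2) (Fin 2) ℝ) :
    (∃ g : Matrix (Fin 2) (Fin 2) ℤ, g.det = 1 ∧ p * q * u * v ∣ g 1 0 ∧
      M = (atkinLehnerSigma (p * u) (q * v) sbar₁ b₁)⁻¹ * g.map (Int.cast : ℤ → ℝ) *
        atkinLehnerSigma (p * v) (q * u) sbar₂ b₂) ↔
    ∃ x e y w : ℤ, x * w * u * v - p * q * y * e = 1 ∧
      M = cosetForm √((u * v : ℤ) : ℝ) x e (p * q * y) w := by
  set τ₁ := atkinLehnerTau (p * u) (q * v) sbar₁ b₁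
  set τ₂ := atkinLehnerTau (p * v) (q * u) sbar₂ b₂
  have hτ₁ : τ₁.det = 1 := det_atkinLehnerTau h₁
  have hτ₂ : τ₂.det = 1 := det_atkinLehnerTau h₂
  have hconj (g : Matrix (Fin 2) (Fin 2) ℤ) := inv_mul_map_mul_eq_of_det_eq_one hτ₁ τ₂ g
    (Real.sqrt_pos.2 (by positivity : (0 : ℝ) < ((q * v : ℤ) : ℝ))).ne' √((q * u : ℤ) : ℝ)
  constructor
  · rintro ⟨g, hdet, hdvd, rfl⟩
    obtain ⟨⟨x, hx⟩, ⟨e, he⟩, ⟨y, hy⟩, ⟨w, hw⟩⟩ := dvd_entries_of_dvd_lowerLeft g hdvd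
    have hH : τ₁.adjugate * g * τ₂ = !![v * x, q * e; p * y, u * w] := by
      rw [eta_fin_two (τ₁.adjugate * g * τ₂), hx, he, hy, hw]
    have hdetH : (τ₁.adjugate * g * τ₂).det = 1 := by
      rw [det_mul, det_mul, det_adjugate, hτ₁, hτ₂, hdet]; norm_num
    rw [hH, det_fin_two_of] at hdetH
    refine ⟨x, e, y, w, by linear_combination hdetH, ?_⟩
    rw [atkinLehnerSigma, atkinLehnerSigma, hconj, hH,
      diagonal_mul_map_mul_diagonal_eq_cosetForm hq hu hv]
  · rintro ⟨x, e, y, w, hrel, rfl⟩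
    set H := !![v * x, q * e; p * y, u * w]
    refine ⟨τ₁ * H * τ₂.adjugate, ?_, dvd_lowerLeft_of_dvd_entries x e y w, ?_⟩
    · rw [det_mul, det_mul, det_adjugate, hτ₁, hτ₂, det_fin_two_of]
      linear_combination hrel
    · have hH : τ₁.adjugate * (τ₁ * H * τ₂.adjugate) * τ₂ = H := by
        rw [Matrix.mul_assoc, Matrix.mul_assoc, adjugate_mul, hτ₂, one_smul, Matrix.mul_one,
          ← Matrix.mul_assoc, adjugate_mul, hτ₁, one_smul, Matrix.one_mul]
      rw [atkinLehnerSigma, atkinLehnerSigma, hconj, hH,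
        diagonal_mul_map_mul_diagonal_eq_cosetForm hq hu hv]

lemma exists_gamma0_and_lowerLeft_iff_cosetForm {c : ℤ} (hq : 0 < q) (hu : 0 < u) (hv : 0 < v)
    (h₁ : sbar₁ * (q * v) - 1 = (p * u) * b₁) (h₂ : sbar₂ * (q * u) - 1 = (p * v) * b₂)
    (hc : p * q ∣ c) (M : Matrix (Fin 2) (Fin 2) ℝ) :
    (∃ g : Matrix (Fin 2) (Fin 2) ℤ, g.det = 1 ∧ p * q * u * v ∣ g 1 0 ∧
      M = (atkinLehnerSigma (p * u) (q * v) sbar₁ b₁)⁻¹ * g.map (Int.cast : ℤ → ℝ) *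
        atkinLehnerSigma (p * v) (q * u) sbar₂ b₂) ∧ M 1 0 = c * √((u * v : ℤ) : ℝ) ↔
    ∃ x e w : ℤ, x * w * u * v - c * e = 1 ∧ M = cosetForm √((u * v : ℤ) : ℝ) x e c w := by
  have hρ : √((u * v : ℤ) : ℝ) ≠ 0 := (Real.sqrt_pos.2 (by positivity)).ne'
  rw [exists_gamma0_iff_cosetForm hq hu hv h₁ h₂]
  constructor
  · rintro ⟨⟨x, e, y, w, hrel, rfl⟩, h10⟩
    have hy : p * q * y = c := by
      simp only [cosetForm, of_apply, cons_val', cons_val_one, cons_val_zero, empty_val',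
        cons_val_fin_one] at h10
      exact_mod_cast mul_right_cancel₀ hρ h10
    subst hy
    exact ⟨x, e, w, hrel, rfl⟩
  · rintro ⟨x, e, w, hrel, rfl⟩
    obtain ⟨y, rfl⟩ := hc
    exact ⟨⟨x, e, y, w, hrel, rfl⟩, by simp [cosetForm]⟩

end AtkinLehner

theorem stmt_3_general (p q u v : ℤ) (hq : 0 < q) (hu : 0 < u) (hv : 0 < v)
    (sbar₁ sbar₂ b₁ b₂ : ℤ)
    (h₁ : sbar₁ * (q * v) - 1 = (p * u) * b₁)
    (h₂ : sbar₂ * (q * u) - 1 = (p * v) * b₂)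
    (σ₁ σ₂ : Matrix (Fin 2) (Fin 2) ℝ)
    (hσ₁ : σ₁ = !![(1 : ℝ), (b₁ : ℝ); ((p * u : ℤ) : ℝ), ((sbar₁ * (q * v) : ℤ) : ℝ)] *
      !![Real.sqrt ((q * v : ℤ) : ℝ), 0; 0, (Real.sqrt ((q * v : ℤ) : ℝ))⁻¹])
    (hσ₂ : σ₂ = !![(1 : ℝ), (b₂ : ℝ); ((p * v : ℤ) : ℝ), ((sbar₂ * (q * u) : ℤ) : ℝ)] *
      !![Real.sqrt ((q * u : ℤ) : ℝ), 0; 0, (Real.sqrt ((q * u : ℤ) : ℝ))⁻¹])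
    (c : ℤ) (hc : 0 < c) (hcpq : (p * q) ∣ c)
    (γ₀ : ℝ) (hγ₀ : γ₀ = (c : ℝ) * Real.sqrt ((u * v : ℤ) : ℝ))
    (coset : Set (Matrix (Fin 2) (Fin 2) ℝ))
    (hcoset : coset = {M | ∃ g : Matrix (Fin 2) (Fin 2) ℤ, g.det = 1 ∧
      (p * q * u * v) ∣ g 1 0 ∧ M = σ₁⁻¹ * g.map (Int.cast : ℤ → ℝ) * σ₂})
    (D : Set (Matrix (Fin 2) (Fin 2) ℝ))
    (hD : D = {M ∈ coset | M 1 0 = γ₀ ∧ M 0 0 ∈ Set.Ico 0 γ₀ ∧ M 1 1 ∈ Set.Ico 0 γ₀}) :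
    D = {M | ∃ x w : ℤ, 0 ≤ x ∧ x < c ∧ 0 ≤ w ∧ w < c ∧ x * w * u * v ≡ 1 [ZMOD c] ∧
        M = !![(x : ℝ) * Real.sqrt ((u * v : ℤ) : ℝ),
                (((x * w * u * v : ℤ) : ℝ) - 1) / ((c : ℝ) * Real.sqrt ((u * v : ℤ) : ℝ));
              (c : ℝ) * Real.sqrt ((u * v : ℤ) : ℝ),
                (w : ℝ) * Real.sqrt ((u * v : ℤ) : ℝ)]} ∧
      ∀ M' ∈ coset, M' 1 0 = γ₀ →
        ∃! t : ℤ × ℤ × Matrix (Fin 2) (Fin 2) ℝ, t.2.2 ∈ D ∧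
          M' = (!![(1 : ℝ), (t.1 : ℝ); 0, 1])⁻¹ * t.2.2 * (!![(1 : ℝ), (t.2.1 : ℝ); 0, 1])⁻¹ := by
  set ρ := √((u * v : ℤ) : ℝ)
  have hρ : 0 < ρ := Real.sqrt_pos.2 (by positivity)
  have hS (M : Matrix (Fin 2) (Fin 2) ℝ) : M ∈ coset ∧ M 1 0 = γ₀ ↔
      ∃ x e w : ℤ, x * w * u * v - c * e = 1 ∧ M = cosetForm ρ x e c w := by
    subst hcoset hγ₀ hσ₁ hσ₂
    rw [← atkinLehnerSigma_eq, ← atkinLehnerSigma_eq]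
    exact exists_gamma0_and_lowerLeft_iff_cosetForm hq hu hv h₁ h₂ hcpq M
  subst hD
  refine ⟨?_, fun M' hM' h10 => existsUnique_translate_mem_Ico (hγ₀ ▸ by positivity) ?_ hM' h10⟩
  · ext M
    rw [Set.mem_sep_iff, ← and_assoc, hS, hγ₀]
    exact exists_cosetForm_mem_Ico_iff hρ hc M
  · intro M hM h10 j k
    obtain ⟨x, e, w, hrel, rfl⟩ := (hS M).1 ⟨hM, h10⟩
    rw [unipotent_mul_cosetForm_mul_unipotent hρ.ne' (Real.sq_sqrt (by positivity))]
    exact ((hS _).2 ⟨_, _, _, by linear_combination hrel, rfl⟩).1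

/-- **Double coset representatives with given lower-left entry** (Equation (2.13) of the
paper): the elements of `σ_{1/r₁}⁻¹ Γ₀(N) σ_{1/r₂}` with lower-left entry `γ₀ = c√(uv)`
and upper-left and lower-right entries in `[0, γ₀)` are exactly the matrices
`!![x√(uv), *; c√(uv), w√(uv)]` with `0 ≤ x, w < c` and `xwuv ≡ 1 (mod c)`, and these form
a complete set of representatives of `Γ∞\{M : M₂₁ = γ₀}/Γ∞`. -/
theorem stmt_3 (p q u v : ℤ) (hp : 0 < p) (hq : 0 < q) (hu : 0 < u) (hv : 0 < v)
    (hpq : IsCoprime p q) (hpu : IsCoprime p u) (hpv : IsCoprime p v)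
    (hqu : IsCoprime q u) (hqv : IsCoprime q v) (huv : IsCoprime u v)
    (sbar₁ sbar₂ b₁ b₂ : ℤ)
    (h₁ : sbar₁ * (q * v) - 1 = (p * u) * b₁)
    (h₂ : sbar₂ * (q * u) - 1 = (p * v) * b₂)
    (σ₁ σ₂ : Matrix (Fin 2) (Fin 2) ℝ)
    (hσ₁ : σ₁ = !![(1 : ℝ), (b₁ : ℝ); ((p * u : ℤ) : ℝ), ((sbar₁ * (q * v) : ℤ) : ℝ)] *
      !![Real.sqrt ((q * v : ℤ) : ℝ), 0; 0, (Real.sqrt ((q * v : ℤ) : ℝ))⁻¹])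
    (hσ₂ : σ₂ = !![(1 : ℝ), (b₂ : ℝ); ((p * v : ℤ) : ℝ), ((sbar₂ * (q * u) : ℤ) : ℝ)] *
      !![Real.sqrt ((q * u : ℤ) : ℝ), 0; 0, (Real.sqrt ((q * u : ℤ) : ℝ))⁻¹])
    (c : ℤ) (hc : 0 < c) (hcpq : (p * q) ∣ c) (hcuv : IsCoprime c (u * v))
    (γ₀ : ℝ) (hγ₀ : γ₀ = (c : ℝ) * Real.sqrt ((u * v : ℤ) : ℝ))
    (coset : Set (Matrix (Fin 2) (Fin 2) ℝ))
    (hcoset : coset = {M | ∃ g : Matrix (Fin 2) (Fin 2) ℤ, g.det = 1 ∧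
      (p * q * u * v) ∣ g 1 0 ∧ M = σ₁⁻¹ * g.map (Int.cast : ℤ → ℝ) * σ₂})
    (D : Set (Matrix (Fin 2) (Fin 2) ℝ))
    (hD : D = {M ∈ coset | M 1 0 = γ₀ ∧ M 0 0 ∈ Set.Ico 0 γ₀ ∧ M 1 1 ∈ Set.Ico 0 γ₀}) :
    D = {M | ∃ x w : ℤ, 0 ≤ x ∧ x < c ∧ 0 ≤ w ∧ w < c ∧ x * w * u * v ≡ 1 [ZMOD c] ∧
        M = !![(x : ℝ) * Real.sqrt ((u * v : ℤ) : ℝ),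
                (((x * w * u * v : ℤ) : ℝ) - 1) / ((c : ℝ) * Real.sqrt ((u * v : ℤ) : ℝ));
              (c : ℝ) * Real.sqrt ((u * v : ℤ) : ℝ),
                (w : ℝ) * Real.sqrt ((u * v : ℤ) : ℝ)]} ∧
      ∀ M' ∈ coset, M' 1 0 = γ₀ →
        ∃! t : ℤ × ℤ × Matrix (Fin 2) (Fin 2) ℝ, t.2.2 ∈ D ∧
          M' = (!![(1 : ℝ), (t.1 : ℝ); 0, 1])⁻¹ * t.2.2 * (!![(1 : ℝ), (t.2.1 : ℝ); 0, 1])⁻¹ :=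
  stmt_3_general p q u v hq hu hv sbar₁ sbar₂ b₁ b₂ h₁ h₂ σ₁ σ₂ hσ₁ hσ₂ c hc hcpq γ₀ hγ₀ coset
    hcoset D hD
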